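/- The function g_R(n) = sin²(π/n)·(n + 1)/(2·cos(π/n)) is strictly decreasing in n on the real interval [4, ∞). -/

import Mathlib

/-!
With `t = π / n`, the derivative of `g_R` is
`sin t / (2 cos² t · n²) · (sin t · cos t · n² - π (n + 1)(1 + cos² t))`.
For `n > 2` the prefactor is positive, and the bracket is negative because
`sin t · cos t · n² ≤ |sin t| · n² ≤ t · n² = π n`.
-/

open Real Set

noncomputable def gR (n : ℝ) : ℝ := sin (π / n) ^ 2 * (n + 1) / (2 * cos (π / n))

lemma sin_pi_div_pos {x : ℝ} (hx : 1 < x) : 0 < sin (π / x) :=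
  sin_pos_of_pos_of_lt_pi (div_pos pi_pos (by linarith)) (div_lt_self pi_pos hx)

lemma cos_pi_div_pos {x : ℝ} (hx : 2 < x) : 0 < cos (π / x) := by
  refine cos_pos_of_mem_Ioo ⟨by linarith [div_pos pi_pos (by linarith : (0 : ℝ) < x), pi_pos], ?_⟩
  exact div_lt_div_of_pos_left pi_pos two_pos hx

lemma sin_mul_cos_mul_sq_lt {x : ℝ} (hx : 0 < x) :
    sin (π / x) * cos (π / x) * x ^ 2 < π * (x + 1) * (1 + cos (π / x) ^ 2) := by
  have hsin : |sin (π / x)| ≤ π / x := abs_sin_le_abs.trans (abs_of_pos (div_pos pi_pos hx)).le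
  have hsc : sin (π / x) * cos (π / x) ≤ π / x :=
    calc sin (π / x) * cos (π / x) ≤ |sin (π / x)| * |cos (π / x)| :=
          (le_abs_self _).trans (abs_mul _ _).le
      _ ≤ |sin (π / x)| := mul_le_of_le_one_right (abs_nonneg _) (abs_cos_le_one _)
      _ ≤ π / x := hsin
  calc sin (π / x) * cos (π / x) * x ^ 2 ≤ π / x * x ^ 2 := by gcongr
    _ = π * x := by field_simp
    _ < π * (x + 1) := mul_lt_mul_of_pos_left (lt_add_one x) pi_pos
    _ ≤ π * (x + 1) * (1 + cos (π / x) ^ 2) :=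
      le_mul_of_one_le_right (by positivity) (le_add_of_nonneg_right (sq_nonneg _))

lemma hasDerivAt_gR {x : ℝ} (hx : x ≠ 0) (hc : cos (π / x) ≠ 0) :
    HasDerivAt gR (sin (π / x) / (2 * cos (π / x) ^ 2 * x ^ 2) *
      (sin (π / x) * cos (π / x) * x ^ 2 - π * (x + 1) * (1 + cos (π / x) ^ 2))) x := by
  have ht : HasDerivAt (fun n : ℝ => π / n) (-π / x ^ 2) x := by
    simpa [div_eq_mul_inv, neg_div] using (hasDerivAt_inv hx).const_mul π
  have hnum := (((hasDerivAt_sin (π / x)).comp x ht).pow 2).mul ((hasDerivAt_id x).add_const 1)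
  have hden := ((hasDerivAt_cos (π / x)).comp x ht).const_mul 2
  refine (hnum.div hden (mul_ne_zero two_ne_zero hc)).congr_deriv ?_
  simp only [Function.comp_apply, Pi.pow_apply, Pi.mul_apply, id]
  field_simp
  linear_combination -π * (x + 1) * sin (π / x) * sin_sq_add_cos_sq (π / x)

lemma strictAntiOn_gR : StrictAntiOn gR (Ioi 2) := by
  have hderiv : ∀ x ∈ Ioi (2 : ℝ), HasDerivAt gR (sin (π / x) / (2 * cos (π / x) ^ 2 * x ^ 2) *
      (sin (π / x) * cos (π / x) * x ^ 2 - π * (x + 1) * (1 + cos (π / x) ^ 2))) x :=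
    fun x hx => hasDerivAt_gR (by linarith [mem_Ioi.1 hx]) (cos_pi_div_pos hx).ne'
  refine strictAntiOn_of_hasDerivWithinAt_neg (convex_Ioi 2)
    (fun x hx => (hderiv x hx).continuousAt.continuousWithinAt)
    (fun x hx => (hderiv x (interior_subset hx)).hasDerivWithinAt) fun x hx => ?_
  rw [interior_Ioi, mem_Ioi] at hx
  have hs := sin_pi_div_pos (by linarith : (1 : ℝ) < x)
  have hc := cos_pi_div_pos hx
  exact mul_neg_of_pos_of_neg (by positivity)
    (sub_neg.2 (sin_mul_cos_mul_sq_lt (by linarith)))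

/-- The function `g_R(n) = sin²(π/n)·(n + 1)/(2·cos(π/n))` is strictly decreasing
on `[4, ∞)`. -/
theorem stmt_12 :
    StrictAntiOn (fun n : ℝ => Real.sin (π / n) ^ 2 * (n + 1) / (2 * Real.cos (π / n)))
      (Set.Ici (4 : ℝ)) :=
  strictAntiOn_gR.mono (Ici_subset_Ioi.2 (by norm_num))
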